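/- arXiv:2201.09398 — 2 statements merged into one kernel-verified Lean document; each statement's English description precedes it below -/
import Mathlib

section
/- (Unbiasedness of the multi-bit encoder–rectifier per coordinate.) Let x_min < x_max be reals, let x ∈ [x_min, x_max], let ε > 0, and let D, m be positive integers with m ≤ D. Write E = e^{ε/m}. Consider the random variable x̂ ∈ {−1, 0, 1} defined as follows: with probability 1 − m/D set x̂ = 0; with probability m/D the coordinate is selected, in which case x̂ = 1 with probability 1/(E + 1) + ((x − x_min)/(x_max − x_min)) · (E − 1)/(E + 1), and x̂ = −1 otherwise. Define the rectifier Rec(x̂) = (D · (x_max − x_min)/(2m)) · ((E + 1)/(E − 1)) · x̂ + (x_max + x_min)/2. Then the expectation of Rec(x̂) equals x; that is, the rectified output of the multi-bit mechanism is a statistically unbiased estimator of the true feature value. -/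
/-- Unbiasedness of the multi-bit encoder–rectifier per coordinate. The coordinate
is selected with probability `m/D`; if selected, it encodes to `1` with probability
`1/(E+1) + ((x - xmin)/(xmax - xmin)) · (E-1)/(E+1)` (where `E = e^{ε/m}`) and to `-1`
otherwise; if not selected it encodes to `0`. The rectifier is
`Rec(y) = (D·(xmax - xmin)/(2m)) · ((E+1)/(E-1)) · y + (xmax + xmin)/2`.
The expectation of the rectified output equals the true feature value `x`. -/
theorem multibit_rectifier_unbiased
    (xmin xmax x ε : ℝ) (hlt : xmin < xmax) (hx : x ∈ Set.Icc xmin xmax) (hε : 0 < ε)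
    (D m : ℕ) (hD : 0 < D) (hm : 0 < m) (hmD : m ≤ D)
    (E : ℝ) (hE : E = Real.exp (ε / m))
    (Ppos : ℝ)
    (hPpos : Ppos = 1 / (E + 1) + ((x - xmin) / (xmax - xmin)) * ((E - 1) / (E + 1)))
    (Rec : ℝ → ℝ)
    (hRec : ∀ y : ℝ, Rec y =
      ((D : ℝ) * (xmax - xmin) / (2 * m)) * ((E + 1) / (E - 1)) * y
        + (xmax + xmin) / 2) :
    (1 - (m : ℝ) / D) * Rec 0
      + ((m : ℝ) / D) * Ppos * Rec 1
      + ((m : ℝ) / D) * (1 - Ppos) * Rec (-1) = x := by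
  have hE1 : 1 < E := by
    rw [hE]
    have : 0 < ε / m := div_pos hε (by exact_mod_cast hm)
    exact Real.one_lt_exp_iff.mpr this
  have hEm : E - 1 ≠ 0 := by linarith
  have hEp : E + 1 ≠ 0 := by linarith
  have hxx : xmax - xmin ≠ 0 := by linarith
  have hmne : (m : ℝ) ≠ 0 := by exact_mod_cast hm.ne'
  have hDne : (D : ℝ) ≠ 0 := by exact_mod_cast hD.ne'
  simp only [hRec, hPpos]
  field_simp
  ring
end

section
/- (Bounded likelihood ratio of the multi-bit encoder on a selected coordinate.) Let x_min < x_max be reals, let ε > 0, let m be a positive integer, and write E = e^{ε/m}. For x ∈ [x_min, x_max], let P(x) = 1/(E + 1) + ((x − x_min)/(x_max − x_min)) · (E − 1)/(E + 1) denote the probability that a selected coordinate with value x is encoded to 1 (and 1 − P(x) the probability it is encoded to −1). Then for all x, x' ∈ [x_min, x_max]: P(x) ≤ e^{ε/m} · P(x') and 1 − P(x) ≤ e^{ε/m} · (1 − P(x')). Consequently, the per-coordinate encoding of the multi-bit mechanism has likelihood ratio at most e^{ε/m} between any two feature values. -/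
/-- Bounded likelihood ratio of the multi-bit encoder on a selected coordinate.
With `E = e^{ε/m}` and `P(x) = 1/(E+1) + ((x - xmin)/(xmax - xmin)) · (E-1)/(E+1)`
the probability that a selected coordinate with value `x ∈ [xmin, xmax]` encodes
to `1` (and `1 - P(x)` that it encodes to `-1`), we have for all
`x, x' ∈ [xmin, xmax]`: `P(x) ≤ e^{ε/m} · P(x')` and
`1 - P(x) ≤ e^{ε/m} · (1 - P(x'))`. -/
theorem multibit_encoder_likelihood_ratio
    (xmin xmax ε : ℝ) (hlt : xmin < xmax) (hε : 0 < ε)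
    (m : ℕ) (hm : 0 < m)
    (E : ℝ) (hE : E = Real.exp (ε / m))
    (P : ℝ → ℝ)
    (hP : ∀ x : ℝ, P x = 1 / (E + 1) + ((x - xmin) / (xmax - xmin)) * ((E - 1) / (E + 1)))
    (x x' : ℝ) (hx : x ∈ Set.Icc xmin xmax) (hx' : x' ∈ Set.Icc xmin xmax) :
    P x ≤ Real.exp (ε / m) * P x' ∧ 1 - P x ≤ Real.exp (ε / m) * (1 - P x') := by
  obtain ⟨hx1, hx2⟩ := hx
  obtain ⟨hx'1, hx'2⟩ := hx'
  have hd : (0:ℝ) < xmax - xmin := by linarith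
  have hE1 : 1 < E := by
    rw [hE]
    have : 0 < ε / m := div_pos hε (by exact_mod_cast hm)
    calc (1:ℝ) = Real.exp 0 := by simp
    _ < Real.exp (ε / m) := Real.exp_lt_exp.mpr this
  have hEpos : 0 < E + 1 := by linarith
  rw [← hE]
  set t : ℝ := (x - xmin) / (xmax - xmin) with ht
  set t' : ℝ := (x' - xmin) / (xmax - xmin) with ht'
  have ht0 : 0 ≤ t := div_nonneg (by linarith) hd.le
  have ht1 : t ≤ 1 := (div_le_one hd).mpr (by linarith)
  have ht'0 : 0 ≤ t' := div_nonneg (by linarith) hd.le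
  have ht'1 : t' ≤ 1 := (div_le_one hd).mpr (by linarith)
  rw [hP x, hP x']
  have h1 : 1 / (E + 1) + t * ((E - 1) / (E + 1)) = (1 + t * (E - 1)) / (E + 1) := by
    field_simp
  have h2 : 1 / (E + 1) + t' * ((E - 1) / (E + 1)) = (1 + t' * (E - 1)) / (E + 1) := by
    field_simp
  rw [h1, h2]
  constructor
  · rw [div_le_iff₀ hEpos, mul_assoc, div_mul_cancel₀ _ hEpos.ne']
    nlinarith [mul_nonneg ht'0 (sub_nonneg.mpr hE1.le),
      mul_le_of_le_one_left (by linarith : (0:ℝ) ≤ E - 1) ht1]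
  · have e1 : 1 - (1 + t * (E - 1)) / (E + 1) = (E - t * (E - 1)) / (E + 1) := by
      field_simp; ring
    have e2 : 1 - (1 + t' * (E - 1)) / (E + 1) = (E - t' * (E - 1)) / (E + 1) := by
      field_simp; ring
    rw [e1, e2, div_le_iff₀ hEpos, mul_assoc, div_mul_cancel₀ _ hEpos.ne']
    nlinarith [mul_nonneg ht0 (sub_nonneg.mpr hE1.le),
      mul_le_of_le_one_left (by linarith : (0:ℝ) ≤ E - 1) ht'1]
end
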